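/- arXiv:2208.14821 — 4 statements merged into one kernel-verified Lean document; each statement's English description precedes it below -/
import Mathlib

section
/- Let Γ be a rooted digraph with root α satisfying P0, P1 and P2 (as in context). For every i ∈ ℕ, |Γ^i(α)| ≤ |Γ^{i+1}(α)|, where Γ^i(α) is the set of vertices reachable from α by an i-arc. -/
variable {V : Type*}

/-- Directed walks of length `n` (`n`-arcs). -/
def arcOf (E : V → V → Prop) : ℕ → V → V → Prop
  | 0 => fun x y => x = y
  | n + 1 => fun x y => ∃ z, E x z ∧ arcOf E n z y

/-- Vertices reachable from `x` by a directed path of length exactly `n`. -/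
def descN (E : V → V → Prop) (n : ℕ) (x : V) : Set V := {y | arcOf E n x y}

/-- The descendant set of `x` (including `x` itself). -/
def desc (E : V → V → Prop) (x : V) : Set V := {y | ∃ n, arcOf E n x y}

theorem self_mem_desc (E : V → V → Prop) (x : V) : x ∈ desc E x := ⟨0, by simp [arcOf]⟩

def descSet (E : V → V → Prop) (S : Set V) : Set V := ⋃ x ∈ S, desc E x

theorem self_mem_descSet (E : V → V → Prop) {S : Set V} {x : V} (hx : x ∈ S) :
    x ∈ descSet E S := Set.mem_biUnion hx (self_mem_desc E x)

def outSet (E : V → V → Prop) (x : V) : Set V := {y | E x y}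

def inSet (E : V → V → Prop) (x : V) : Set V := {y | E y x}

def IsAut (E : V → V → Prop) (g : Equiv.Perm V) : Prop := ∀ x y, E x y ↔ E (g x) (g y)

def Rooted (E : V → V → Prop) (α : V) : Prop := ∀ y, y ∈ desc E α

def P0 (E : V → V → Prop) (α : V) (m : ℕ) : Prop :=
  0 < m ∧ (∀ x, (outSet E x).Finite ∧ (outSet E x).ncard = m) ∧
    ∀ s t : ℕ, s ≠ t → Disjoint (descN E s α) (descN E t α)

def P1 (E : V → V → Prop) : Prop :=
  ∀ u : V, ∃ f : desc E u ≃ V, ∀ x y : desc E u, (E x.1 y.1 ↔ E (f x) (f y))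

def P2 (E : V → V → Prop) (α : V) : Prop :=
  ∀ i : ℕ, ∀ x ∈ descN E i α, ∀ y ∈ descN E i α,
    ∃ g : Equiv.Perm V, IsAut E g ∧ g α = α ∧ g x = y

def P3 (E : V → V → Prop) (α : V) : Prop :=
  ∀ i : ℕ, (descN E i α).ncard < (descN E (i + 1) α).ncard

def EdgeTrans (E : V → V → Prop) : Prop :=
  ∀ a b c d : V, E a b → E c d → ∃ g : Equiv.Perm V, IsAut E g ∧ g a = c ∧ g b = d

def VertexTrans (E : V → V → Prop) : Prop :=
  ∀ u v : V, ∃ g : Equiv.Perm V, IsAut E g ∧ g u = v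

def NoDirectedCycles (E : V → V → Prop) : Prop :=
  ∀ s : ℕ, 1 ≤ s → ∀ x : V, ¬ arcOf E s x x

def HasPropZ {W : Type*} (E : W → W → Prop) : Prop :=
  ∃ f : W → ℤ, Function.Surjective f ∧ ∀ x y : W, E x y → f y = f x + 1

def deltaSetoid (E : V → V → Prop) (n : ℕ) : Setoid V :=
  ⟨fun u v => descN E n u = descN E n v, ⟨fun _ => rfl, Eq.symm, Eq.trans⟩⟩

def QEdge (E : V → V → Prop) (n : ℕ)
    (A B : Quotient (deltaSetoid E n)) : Prop :=
  ∃ a b : V, Quotient.mk (deltaSetoid E n) a = A ∧ Quotient.mk (deltaSetoid E n) b = B ∧ E a b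

def cls (E : V → V → Prop) (n : ℕ) (v : V) : Set V := {u | descN E n u = descN E n v}

def QEdgeSet (E : V → V → Prop) (A B : Set V) : Prop := ∃ a ∈ A, ∃ b ∈ B, E a b

def WDH (E : V → V → Prop) : Prop :=
  VertexTrans E ∧
  ∀ (X Y : Finset V) (f : descSet E (↑X : Set V) ≃ descSet E (↑Y : Set V)),
    (∀ a b : descSet E (↑X : Set V), (E a.1 b.1 ↔ E (f a).1 (f b).1)) →
    ∃ g : Equiv.Perm V, IsAut E g ∧
      ∀ (x : V) (hx : x ∈ X), g x = (f ⟨x, self_mem_descSet E (by exact_mod_cast hx)⟩).1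

def EdgeT (E : V → V → Prop) := {p : V × V // E p.1 p.2}

def reachSetoid (E : V → V → Prop) : Setoid (EdgeT E) :=
  ⟨Relation.EqvGen (fun a b => a.1.1 = b.1.1 ∨ a.1.2 = b.1.2),
    Relation.EqvGen.is_equivalence _⟩

def AlSources (E : V → V → Prop) (A : Quotient (reachSetoid E)) : Set V :=
  {v | ∃ e : EdgeT E, Quotient.mk (reachSetoid E) e = A ∧ v = e.1.1}

def AlSinks (E : V → V → Prop) (A : Quotient (reachSetoid E)) : Set V :=
  {v | ∃ e : EdgeT E, Quotient.mk (reachSetoid E) e = A ∧ v = e.1.2}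

def AlEdge (E : V → V → Prop) (A B : Quotient (reachSetoid E)) : Prop :=
  ∃ v, v ∈ AlSinks E A ∧ v ∈ AlSources E B

theorem arcOf_trans' {E : V → V → Prop} {t : ℕ} {z : V} :
    ∀ {s : ℕ} {x y : V}, arcOf E s x y → arcOf E t y z → arcOf E (s + t) x z := by
  intro s
  induction s with
  | zero =>
    intro x y h1 h2
    rw [show x = y from h1]
    simpa using h2
  | succ n ih =>
    intro x y h1 h2
    obtain ⟨w, hw, h1'⟩ := h1
    have h3 := ih h1' h2
    rw [Nat.succ_add]
    exact ⟨w, hw, h3⟩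

theorem arcOf_map' {E : V → V → Prop} {u : V} (f : desc E u ≃ V)
    (hf : ∀ x y : desc E u, E x.1 y.1 ↔ E (f x) (f y)) :
    ∀ (n : ℕ) (x y : desc E u), arcOf E n x.1 y.1 → arcOf E n (f x) (f y) := by
  intro n
  induction n with
  | zero =>
    intro x y h
    exact congrArg f (Subtype.ext h)
  | succ n ih =>
    intro x y h
    obtain ⟨z, hz, h'⟩ := h
    have hzd : z ∈ desc E u := by
      obtain ⟨m, hm⟩ := x.2
      exact ⟨m + 1, arcOf_trans' hm ⟨z, hz, rfl⟩⟩
    exact ⟨f ⟨z, hzd⟩, (hf x ⟨z, hzd⟩).mp hz, ih ⟨z, hzd⟩ y h'⟩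

theorem arcOf_map_symm' {E : V → V → Prop} {u : V} (f : desc E u ≃ V)
    (hf : ∀ x y : desc E u, E x.1 y.1 ↔ E (f x) (f y)) :
    ∀ (n : ℕ) (x : desc E u) (w : V), arcOf E n (f x) w → arcOf E n x.1 (f.symm w).1 := by
  intro n
  induction n with
  | zero =>
    intro x w h
    have : f.symm (f x) = f.symm w := congrArg f.symm h
    rw [Equiv.symm_apply_apply] at this
    exact congrArg Subtype.val this
  | succ n ih =>
    intro x w h
    obtain ⟨z, hz, h'⟩ := h
    have hz' : E x.1 (f.symm z).1 := (hf x (f.symm z)).mpr (by rwa [Equiv.apply_symm_apply])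
    have h2 := ih (f.symm z) w (by rwa [Equiv.apply_symm_apply])
    exact ⟨(f.symm z).1, hz', h2⟩

theorem descN_finite' {E : V → V → Prop} (hout : ∀ x, (outSet E x).Finite) :
    ∀ (n : ℕ) (α : V), (descN E n α).Finite := by
  intro n
  induction n with
  | zero =>
    intro α
    exact (Set.finite_singleton α).subset (fun y h => Set.mem_singleton_iff.mpr (Eq.symm h))
  | succ n ih =>
    intro α
    have hsub : descN E (n + 1) α ⊆ ⋃ z ∈ outSet E α, descN E n z := by
      rintro y ⟨z, hz, h⟩
      exact Set.mem_biUnion hz h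
    exact (Set.Finite.biUnion (hout α) (fun z _ => ih z)).subset hsub

/-- level sizes are non-decreasing. -/
theorem level_sizes_mono (E : V → V → Prop) (α : V) (m : ℕ)
    (hroot : Rooted E α) (h0 : P0 E α m) (h1 : P1 E) (h2 : P2 E α) :
    ∀ i : ℕ, (descN E i α).ncard ≤ (descN E (i + 1) α).ncard := by
  intro i
  obtain ⟨hm, hout, hdisj⟩ := h0
  have hfin : ∀ n, (descN E n α).Finite := fun n => descN_finite' (fun x => (hout x).1) n α
  have hne : (outSet E α).Nonempty := by
    rcases Set.eq_empty_or_nonempty (outSet E α) with h | h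
    · exfalso
      have h2' := (hout α).2
      rw [h, Set.ncard_empty] at h2'
      omega
    · exact h
  obtain ⟨β, hβ⟩ := hne
  obtain ⟨f, hf⟩ := h1 β
  set b : desc E β := ⟨β, self_mem_desc E β⟩ with hb
  have hAroot : ∀ v : V, v ∈ desc E (f b) := by
    intro v
    obtain ⟨n, hn⟩ := (f.symm v).2
    have h3 := arcOf_map' f hf n b (f.symm v) hn
    rw [Equiv.apply_symm_apply] at h3
    exact ⟨n, h3⟩
  have hA : f b = α := by
    obtain ⟨a, ha⟩ := hroot (f b)
    obtain ⟨c, hc⟩ := hAroot α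
    have hcomp : arcOf E (a + c) α α := arcOf_trans' ha hc
    have hac : a + c = 0 := by
      by_contra h
      exact (Set.disjoint_left.mp (hdisj (a + c) 0 h) hcomp) rfl
    have ha0 : a = 0 := by omega
    subst ha0
    exact Eq.symm ha
  have hsub : descN E i β ⊆ descN E (i + 1) α := fun y hy => ⟨β, hβ, hy⟩
  have hfinβ : (descN E i β).Finite := (hfin (i + 1)).subset hsub
  have h1' : (descN E i α).ncard ≤ (descN E i β).ncard := by
    refine Set.ncard_le_ncard_of_injOn (fun y => (f.symm y).1) ?_ ?_ hfinβ
    · intro y hy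
      have h3 : arcOf E i (f b) y := by rw [hA]; exact hy
      exact arcOf_map_symm' f hf i b y h3
    · intro x hx y hy hxy
      exact f.symm.injective (Subtype.ext hxy)
  exact le_trans h1' (Set.ncard_le_ncard hsub (hfin (i + 1)))
end

section
/- Let Γ be a rooted digraph satisfying P0, P1 and P2 which does not satisfy P3, and let N be the least index such that the in-valency sequence is constant from N on. Then: (a) |Γ^i(α)| = |Γ^{N-1}(α)| for all i ≥ N−1; (b) r_i = m for all i ≥ N; (c) for all t ≥ 1, all u, v ∈ Γ^t(α), and all l ≥ N−1, one has Γ^l(u) = Γ^{l+t}(α) = Γ^l(v). -/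
variable {V : Type*}

lemma arcOf_add (E : V → V → Prop) (s t : ℕ) (x y : V) :
    arcOf E (s + t) x y ↔ ∃ z, arcOf E s x z ∧ arcOf E t z y := by
  induction s generalizing x with
  | zero => simpa [arcOf] using Iff.rfl
  | succ n ih =>
      rw [Nat.succ_add]
      constructor
      · rintro ⟨z, hxz, h⟩
        obtain ⟨w, hw1, hw2⟩ := (ih z).mp h
        exact ⟨w, ⟨z, hxz, hw1⟩, hw2⟩
      · rintro ⟨w, ⟨z, hxz, hzw⟩, hwy⟩
        exact ⟨z, hxz, (ih z).mpr ⟨w, hzw, hwy⟩⟩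

lemma arcOf_one (E : V → V → Prop) (x y : V) : arcOf E 1 x y ↔ E x y := by
  constructor
  · rintro ⟨z, h, rfl⟩; exact h
  · exact fun h => ⟨y, h, rfl⟩

lemma arcOf_succ' (E : V → V → Prop) (n : ℕ) (x y : V) :
    arcOf E (n + 1) x y ↔ ∃ z, arcOf E n x z ∧ E z y := by
  rw [arcOf_add]
  simp [arcOf_one]

lemma mem_descN {E : V → V → Prop} {n : ℕ} {x y : V} :
    y ∈ descN E n x ↔ arcOf E n x y := Iff.rfl

lemma descN_zero (E : V → V → Prop) (x : V) : descN E 0 x = {x} := by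
  ext y; simp [descN, arcOf, eq_comm]

lemma desc_closed {E : V → V → Prop} {u x z : V} (hx : x ∈ desc E u) (hz : E x z) :
    z ∈ desc E u := by
  obtain ⟨n, hn⟩ := hx
  exact ⟨n + 1, (arcOf_succ' E n u z).mpr ⟨x, hn, hz⟩⟩

lemma p1_lemma (E : V → V → Prop) (α : V)
    (hroot : ∀ y, ∃ n, arcOf E n α y)
    (hdisj : ∀ s t : ℕ, s ≠ t → Disjoint (descN E s α) (descN E t α))
    (h1 : ∀ u : V, ∃ f : desc E u ≃ V, ∀ x y : desc E u, (E x.1 y.1 ↔ E (f x) (f y)))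
    (u : V) :
    ∃ g : V → V, ∀ l : ℕ, Set.BijOn g (descN E l u) (descN E l α) ∧
      ∀ x ∈ descN E l u, ∃ φ : V → V, Set.InjOn φ (inSet E (g x)) ∧
        φ '' (inSet E (g x)) ⊆ inSet E x := by
  classical
  obtain ⟨f, hf⟩ := h1 u
  have hu : u ∈ desc E u := ⟨0, rfl⟩
  have harc : ∀ n : ℕ, ∀ p q : desc E u, arcOf E n p.1 q.1 ↔ arcOf E n (f p) (f q) := by
    intro n
    induction n with
    | zero =>
        intro p q
        constructor
        · intro h; exact congrArg f (Subtype.ext h)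
        · intro h; exact congrArg Subtype.val (f.injective h)
    | succ n ih =>
        intro p q
        constructor
        · rintro ⟨z, hpz, hq⟩
          have hz : z ∈ desc E u := desc_closed p.2 hpz
          exact ⟨f ⟨z, hz⟩, (hf p ⟨z, hz⟩).mp hpz, (ih ⟨z, hz⟩ q).mp hq⟩
        · rintro ⟨w, hpw, hq⟩
          refine ⟨(f.symm w).1, (hf p (f.symm w)).mpr ?_, (ih (f.symm w) q).mpr ?_⟩
          · rwa [Equiv.apply_symm_apply]
          · rwa [Equiv.apply_symm_apply]
  set w₀ : V := f ⟨u, hu⟩ with hw₀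
  have hw₀root : ∀ y, ∃ n, arcOf E n w₀ y := by
    intro y
    obtain ⟨n, hn⟩ := (f.symm y).2
    have := (harc n ⟨u, hu⟩ (f.symm y)).mp hn
    rw [Equiv.apply_symm_apply] at this
    exact ⟨n, this⟩
  have hw₀α : w₀ = α := by
    obtain ⟨s, hs⟩ := hroot w₀
    obtain ⟨n, hn⟩ := hw₀root α
    have hcyc : arcOf E (s + n) α α := (arcOf_add E s n α α).mpr ⟨w₀, hs, hn⟩
    have hs0 : s + n = 0 := by
      by_contra h
      exact Set.disjoint_left.mp (hdisj (s + n) 0 h) hcyc rfl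
    have : s = 0 := Nat.eq_zero_of_add_eq_zero_right hs0
    subst this
    exact hs.symm
  refine ⟨fun v => if h : v ∈ desc E u then (f ⟨v, h⟩ : V) else v, fun l => ?_⟩
  set g : V → V := fun v => if h : v ∈ desc E u then (f ⟨v, h⟩ : V) else v with hg
  have hgval : ∀ (v : V) (h : v ∈ desc E u), g v = f ⟨v, h⟩ := by
    intro v h; simp [hg, h]
  have hmem : ∀ x ∈ descN E l u, x ∈ desc E u := fun x hx => ⟨l, hx⟩
  have hmapsto : ∀ x ∈ descN E l u, g x ∈ descN E l α := by
    intro x hx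
    have h := hmem x hx
    rw [hgval x h]
    have := (harc l ⟨u, hu⟩ ⟨x, h⟩).mp hx
    rwa [← hw₀, hw₀α] at this
  constructor
  · refine ⟨hmapsto, ?_, ?_⟩
    · intro a ha b hb hab
      rw [hgval a (hmem a ha), hgval b (hmem b hb)] at hab
      have := f.injective hab
      exact congrArg Subtype.val this
    · intro y hy
      have hy' : arcOf E l α y := hy
      have harcq : arcOf E l u (f.symm y).1 := by
        refine (harc l ⟨u, hu⟩ (f.symm y)).mpr ?_
        rw [Equiv.apply_symm_apply, ← hw₀, hw₀α]
        exact hy'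
      refine ⟨(f.symm y).1, harcq, ?_⟩
      rw [hgval (f.symm y).1 (f.symm y).2]
      rw [show (⟨(f.symm y).1, (f.symm y).2⟩ : desc E u) = f.symm y from Subtype.ext rfl]
      exact f.apply_symm_apply y
  · intro x hx
    have h := hmem x hx
    refine ⟨fun z => ((f.symm z : desc E u) : V), ?_, ?_⟩
    · intro a _ b _ hab
      exact f.symm.injective (Subtype.ext hab)
    · rintro _ ⟨z, hz, rfl⟩
      have hz' : E z (f ⟨x, h⟩) := by rwa [hgval x h] at hz
      have : E (f (f.symm z)) (f ⟨x, h⟩) := by rwa [Equiv.apply_symm_apply]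
      exact (hf (f.symm z) ⟨x, h⟩).mpr this

lemma descN_succ_eq (E : V → V → Prop) (α : V) (n : ℕ) :
    descN E (n + 1) α = ⋃ x ∈ descN E n α, outSet E x := by
  ext y
  simp only [mem_descN, arcOf_succ', Set.mem_iUnion, outSet, Set.mem_setOf_eq]
  tauto

lemma levels_fin (E : V → V → Prop) (α : V) {m : ℕ} (hm : 0 < m)
    (hout : ∀ x, (outSet E x).Finite ∧ (outSet E x).ncard = m) (n : ℕ) :
    (descN E n α).Finite ∧ (descN E n α).Nonempty := by
  induction n with
  | zero => rw [descN_zero]; exact ⟨Set.finite_singleton α, ⟨α, rfl⟩⟩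
  | succ n ih =>
      rw [descN_succ_eq]
      constructor
      · exact Set.Finite.biUnion ih.1 fun x _ => (hout x).1
      · obtain ⟨x, hx⟩ := ih.2
        have : (outSet E x).Nonempty := by
          rw [Set.nonempty_iff_ne_empty]
          intro h
          have := (hout x).2
          rw [h, Set.ncard_empty] at this
          omega
        obtain ⟨y, hy⟩ := this
        exact ⟨y, Set.mem_biUnion hx hy⟩

lemma counting (E : V → V → Prop) (α : V) {m : ℕ} (hm : 0 < m)
    (hout : ∀ x, (outSet E x).Finite ∧ (outSet E x).ncard = m)
    (hdisj : ∀ s t : ℕ, s ≠ t → Disjoint (descN E s α) (descN E t α))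
    (hroot : ∀ y, ∃ n, arcOf E n α y) (i ri : ℕ)
    (hri : ∀ y ∈ descN E (i + 1) α, (inSet E y).ncard = ri) :
    m * (descN E i α).ncard = ri * (descN E (i + 1) α).ncard := by
  classical
  have hA := (levels_fin E α hm hout i).1
  have hB := (levels_fin E α hm hout (i + 1)).1
  have hstep : ∀ x ∈ descN E i α, ∀ y, E x y → y ∈ descN E (i + 1) α :=
    fun x hx y hy => (arcOf_succ' E i α y).mpr ⟨x, hx, hy⟩
  have hin : ∀ y ∈ descN E (i + 1) α, ∀ z, E z y → z ∈ descN E i α := by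
    intro y hy z hz
    obtain ⟨j, hj⟩ := hroot z
    have hy' : y ∈ descN E (j + 1) α := (arcOf_succ' E j α y).mpr ⟨z, hj, hz⟩
    have : j = i := by
      by_contra h
      exact Set.disjoint_left.mp (hdisj (j + 1) (i + 1) (by omega)) hy' hy
    rwa [this] at hj
  set A : Finset V := hA.toFinset with hAdef
  set B : Finset V := hB.toFinset with hBdef
  set T : Finset (V × V) := (A ×ˢ B).filter (fun p => E p.1 p.2) with hT
  have hmemT : ∀ p : V × V, p ∈ T ↔ p.1 ∈ descN E i α ∧ E p.1 p.2 := by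
    intro p
    simp only [hT, Finset.mem_filter, Finset.mem_product, hAdef, hBdef,
      Set.Finite.mem_toFinset]
    constructor
    · rintro ⟨⟨h1, h2⟩, h3⟩; exact ⟨h1, h3⟩
    · rintro ⟨h1, h3⟩; exact ⟨⟨h1, hstep _ h1 _ h3⟩, h3⟩
  have hfib1 : ∀ x ∈ A, (T.filter (fun p => p.1 = x)).card = m := by
    intro x hx
    have hxA : x ∈ descN E i α := by simpa [hAdef, Set.Finite.mem_toFinset] using hx
    have : T.filter (fun p => p.1 = x) = Finset.image (fun y => (x, y)) (hout x).1.toFinset := by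
      ext p
      simp only [Finset.mem_filter, hmemT, Finset.mem_image, Set.Finite.mem_toFinset, outSet,
        Set.mem_setOf_eq]
      constructor
      · rintro ⟨⟨h1, h2⟩, h3⟩
        exact ⟨p.2, h3 ▸ h2, Prod.ext h3.symm rfl⟩
      · rintro ⟨y, hy, rfl⟩
        exact ⟨⟨hxA, hy⟩, rfl⟩
    rw [this, Finset.card_image_of_injective _ (fun a b h => by simpa using h),
      ← Set.ncard_eq_toFinset_card _ (hout x).1]
    exact (hout x).2
  have hcard1 : T.card = m * A.card := by
    rw [Finset.card_eq_sum_card_fiberwise (f := Prod.fst) (t := A)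
      (fun p hp => by simp [hAdef, Set.Finite.mem_toFinset, ((hmemT p).mp hp).1])]
    rw [Finset.sum_congr rfl hfib1, Finset.sum_const, smul_eq_mul, mul_comm]
  have hfib2 : ∀ y ∈ B, (T.filter (fun p => p.2 = y)).card = ri := by
    intro y hy
    have hyB : y ∈ descN E (i + 1) α := by simpa [hBdef, Set.Finite.mem_toFinset] using hy
    have hinfin : (inSet E y).Finite := hA.subset (fun z hz => hin y hyB z hz)
    have : T.filter (fun p => p.2 = y) = Finset.image (fun z => (z, y)) hinfin.toFinset := by
      ext p
      simp only [Finset.mem_filter, hmemT, Finset.mem_image, Set.Finite.mem_toFinset, inSet,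
        Set.mem_setOf_eq]
      constructor
      · rintro ⟨⟨h1, h2⟩, h3⟩
        exact ⟨p.1, h3 ▸ h2, Prod.ext rfl h3.symm⟩
      · rintro ⟨z, hz, rfl⟩
        exact ⟨⟨hin y hyB z hz, hz⟩, rfl⟩
    rw [this, Finset.card_image_of_injective _ (fun a b h => by simpa using h),
      ← Set.ncard_eq_toFinset_card _ hinfin]
    exact hri y hyB
  have hcard2 : T.card = ri * B.card := by
    have hTmaps : ∀ p ∈ T, p.2 ∈ B := by
      intro p hp
      obtain ⟨h1, h2⟩ := (hmemT p).mp hp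
      simp [hBdef, Set.Finite.mem_toFinset, hstep p.1 h1 p.2 h2]
    rw [Finset.card_eq_sum_card_fiberwise (f := Prod.snd) (t := B) hTmaps]
    rw [Finset.sum_congr rfl hfib2, Finset.sum_const, smul_eq_mul, mul_comm]
  rw [Set.ncard_eq_toFinset_card _ hA, Set.ncard_eq_toFinset_card _ hB]
  rw [← hcard1, ← hcard2]

lemma in_prev (E : V → V → Prop) (α : V)
    (hdisj : ∀ s t : ℕ, s ≠ t → Disjoint (descN E s α) (descN E t α))
    (hroot : ∀ y, ∃ n, arcOf E n α y) {i : ℕ} {y : V}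
    (hy : y ∈ descN E (i + 1) α) : inSet E y ⊆ descN E i α := by
  intro z hz
  obtain ⟨j, hj⟩ := hroot z
  have hy' : y ∈ descN E (j + 1) α := (arcOf_succ' E j α y).mpr ⟨z, hj, hz⟩
  have : j = i := by
    by_contra h
    exact Set.disjoint_left.mp (hdisj (j + 1) (i + 1) (by omega)) hy' hy
  rwa [this] at hj

lemma descN_sub (E : V → V → Prop) {α u : V} {t : ℕ} (hu : u ∈ descN E t α) (l : ℕ) :
    descN E l u ⊆ descN E (l + t) α := by
  intro y hy
  rw [add_comm]
  exact (arcOf_add E t l α y).mpr ⟨u, hu, hy⟩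


/-- structure when P3 fails. -/
theorem structure_not_P3 (E : V → V → Prop) (α : V) (m N : ℕ) (r : ℕ → ℕ)
    (hroot : Rooted E α) (h0 : P0 E α m) (h1 : P1 E) (h2 : P2 E α)
    (hnot3 : ¬ P3 E α)
    (hr : ∀ i : ℕ, 1 ≤ i → ∀ x ∈ descN E i α, (inSet E x).ncard = r i)
    (hN1 : 1 ≤ N) (hNconst : ∀ j : ℕ, N ≤ j → r j = r N)
    (hNmin : ∀ N' : ℕ, 1 ≤ N' → (∀ j : ℕ, N' ≤ j → r j = r N') → N ≤ N') :
    (∀ i : ℕ, N - 1 ≤ i → (descN E i α).ncard = (descN E (N - 1) α).ncard) ∧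
    (∀ i : ℕ, N ≤ i → r i = m) ∧
    (∀ t : ℕ, 1 ≤ t → ∀ u ∈ descN E t α, ∀ v ∈ descN E t α, ∀ l : ℕ, N - 1 ≤ l →
      descN E l u = descN E (l + t) α ∧ descN E l v = descN E (l + t) α) := by
  obtain ⟨hm, hout, hdisj⟩ := h0
  have hroot' : ∀ y, ∃ n, arcOf E n α y := hroot
  have hfin : ∀ n, (descN E n α).Finite := fun n => (levels_fin E α hm hout n).1
  have hne : ∀ n, (descN E n α).Nonempty := fun n => (levels_fin E α hm hout n).2
  have hpos : ∀ n, 0 < (descN E n α).ncard := fun n => (Set.ncard_pos (hfin n)).mpr (hne n)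
  set a : ℕ → ℕ := fun n => (descN E n α).ncard with ha
  -- level sizes of descendants
  have hsize : ∀ u : V, ∀ l : ℕ, (descN E l u).ncard = a l := by
    intro u l
    obtain ⟨g, hg⟩ := p1_lemma E α hroot' hdisj h1 u
    calc (descN E l u).ncard = (g '' descN E l u).ncard :=
          (Set.ncard_image_of_injOn (hg l).1.injOn).symm
      _ = (descN E l α).ncard := by rw [(hg l).1.image_eq]
  -- counting identity
  have hcnt : ∀ i : ℕ, m * a i = r (i + 1) * a (i + 1) := by
    intro i
    exact counting E α hm hout hdisj hroot' i (r (i + 1)) (hr (i + 1) (by omega))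
  -- levels nondecreasing
  have hlevmono : ∀ l : ℕ, a l ≤ a (l + 1) := by
    intro l
    obtain ⟨u, hu⟩ := hne 1
    calc a l = (descN E l u).ncard := (hsize u l).symm
    _ ≤ a (l + 1) := Set.ncard_le_ncard (descN_sub E hu l) (hfin (l + 1))
  -- r bounded by m
  have hrle : ∀ i : ℕ, r (i + 1) ≤ m := by
    intro i
    by_contra h
    push_neg at h
    have h1' : m * a i < r (i + 1) * a i :=
      (Nat.mul_lt_mul_right (hpos i)).mpr h
    have h2' : r (i + 1) * a i ≤ r (i + 1) * a (i + 1) :=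
      Nat.mul_le_mul_left _ (hlevmono i)
    exact absurd (hcnt i) (Nat.ne_of_lt (lt_of_lt_of_le h1' h2'))
  -- r nondecreasing
  have hrmono : ∀ j : ℕ, 1 ≤ j → r j ≤ r (j + 1) := by
    intro j hj
    obtain ⟨u, hu⟩ := hne 1
    obtain ⟨g, hg⟩ := p1_lemma E α hroot' hdisj h1 u
    have hnej : (descN E j u).Nonempty := by
      apply Set.nonempty_of_ncard_ne_zero
      rw [hsize u j]
      exact (hpos j).ne'
    obtain ⟨x, hx⟩ := hnej
    obtain ⟨φ, hφinj, hφsub⟩ := (hg j).2 x hx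
    have hgx : g x ∈ descN E j α := (hg j).1.mapsTo hx
    have hxj1 : x ∈ descN E (j + 1) α := descN_sub E hu j hx
    have hinx_fin : (inSet E x).Finite := (hfin j).subset (in_prev E α hdisj hroot' hxj1)
    calc r j = (inSet E (g x)).ncard := (hr j hj (g x) hgx).symm
      _ = (φ '' inSet E (g x)).ncard := (Set.ncard_image_of_injOn hφinj).symm
      _ ≤ (inSet E x).ncard := Set.ncard_le_ncard hφsub hinx_fin
      _ = r (j + 1) := hr (j + 1) (by omega) x hxj1
  -- get a failing index
  rw [P3] at hnot3
  push_neg at hnot3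
  obtain ⟨i₀, hi₀⟩ := hnot3
  have heq0 : a (i₀ + 1) = a i₀ := le_antisymm hi₀ (hlevmono i₀)
  have hri₀ : r (i₀ + 1) = m := by
    have h := hcnt i₀
    rw [heq0] at h
    exact (Nat.eq_of_mul_eq_mul_right (hpos i₀) h.symm)
  have hrm : ∀ j : ℕ, i₀ + 1 ≤ j → r j = m := by
    intro j hj
    have hge : m ≤ r j := by
      clear hi₀ heq0
      induction j with
      | zero => omega
      | succ k ih =>
          rcases Nat.lt_or_ge (i₀ + 1) (k + 1) with hk | hk
          · exact le_trans (ih (by omega)) (hrmono k (by omega))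
          · have : i₀ + 1 = k + 1 := by omega
            rw [← this, hri₀]
    have hle : r j ≤ m := by
      obtain ⟨k, rfl⟩ : ∃ k, j = k + 1 := ⟨j - 1, by omega⟩
      exact hrle k
    omega
  have hNle : N ≤ i₀ + 1 :=
    hNmin (i₀ + 1) (by omega) (fun j hj => by rw [hrm j hj, hrm (i₀ + 1) le_rfl])
  have hrN : r N = m := by
    have := hNconst (i₀ + 1) hNle
    rw [← this, hrm (i₀ + 1) le_rfl]
  have partb : ∀ i : ℕ, N ≤ i → r i = m := fun i hi => (hNconst i hi).trans hrN
  -- part (a)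
  have hstep : ∀ k : ℕ, a (N - 1 + k) = a (N - 1) := by
    intro k
    induction k with
    | zero => rfl
    | succ k ih =>
        have h : m * a (N - 1 + k) = r (N - 1 + k + 1) * a (N - 1 + k + 1) := hcnt (N - 1 + k)
        rw [partb (N - 1 + k + 1) (by omega)] at h
        have := Nat.eq_of_mul_eq_mul_left hm h
        rw [show N - 1 + (k + 1) = N - 1 + k + 1 from rfl, ← this, ih]
  have parta : ∀ i : ℕ, N - 1 ≤ i → a i = a (N - 1) := by
    intro i hi
    obtain ⟨k, rfl⟩ := Nat.exists_eq_add_of_le hi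
    exact hstep k
  refine ⟨parta, partb, ?_⟩
  -- part (c)
  have key : ∀ t : ℕ, 1 ≤ t → ∀ u ∈ descN E t α, ∀ l : ℕ, N - 1 ≤ l →
      descN E l u = descN E (l + t) α := by
    intro t ht u hu l hl
    have hsub := descN_sub E hu l
    refine Set.eq_of_subset_of_ncard_le hsub ?_ (hfin (l + t))
    rw [hsize u l]
    have h1' : a l = a (N - 1) := parta l hl
    have h2' : a (l + t) = a (N - 1) := parta (l + t) (by omega)
    show a (l + t) ≤ a l
    omega
  intro t ht u hu v hv l hl
  exact ⟨key t ht u hu l hl, key t ht v hv l hl⟩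
end

section
/- Let Γ be a rooted digraph satisfying P0, P1 and P2. Then Γ satisfies P3 if and only if there exists a vertex x of Γ and non-empty subsets U, V of the set of out-neighbours of x such that desc(U) ∩ desc(V) = ∅. -/
variable {V : Type*}

namespace DigraphAux


lemma arcOf_append {E : V → V → Prop} {n : ℕ} {y z : V} (m : ℕ) {x : V}
    (h1 : arcOf E m x y) (h2 : arcOf E n y z) : arcOf E (m + n) x z := by
  induction m generalizing x with
  | zero =>
    simp only [arcOf] at h1
    subst h1
    simpa using h2
  | succ k ih =>
    obtain ⟨w, hw, harc⟩ := h1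
    rw [show k + 1 + n = (k + n) + 1 from by omega]
    exact ⟨w, hw, ih harc⟩

lemma arcOf_snoc {E : V → V → Prop} {n : ℕ} {x w y : V}
    (h : arcOf E n x w) (he : E w y) : arcOf E (n + 1) x y :=
  arcOf_append n h ⟨y, he, rfl⟩

lemma arcOf_unsnoc {E : V → V → Prop} : ∀ (n : ℕ) {x y : V}, arcOf E (n + 1) x y →
    ∃ w, arcOf E n x w ∧ E w y := by
  intro n
  induction n with
  | zero =>
    intro x y h
    obtain ⟨z, hz, h0⟩ := h
    have : z = y := h0
    exact ⟨x, rfl, this ▸ hz⟩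
  | succ k ih =>
    intro x y h
    obtain ⟨z, hz, h'⟩ := h
    obtain ⟨w, hw, he⟩ := ih h'
    exact ⟨w, ⟨z, hz, hw⟩, he⟩

lemma aut_arcOf {E : V → V → Prop} {g : Equiv.Perm V} (hg : IsAut E g) :
    ∀ (n : ℕ) {x y : V}, arcOf E n x y → arcOf E n (g x) (g y) := by
  intro n
  induction n with
  | zero => intro x y h; exact congrArg g h
  | succ k ih =>
    intro x y h
    obtain ⟨z, hz, h'⟩ := h
    exact ⟨g z, (hg x z).1 hz, ih h'⟩

lemma isAut_symm {E : V → V → Prop} {g : Equiv.Perm V} (hg : IsAut E g) : IsAut E g.symm := by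
  intro x y
  simpa using (hg (g.symm x) (g.symm y)).symm

lemma level_succ (E : V → V → Prop) (α : V) (n : ℕ) :
    descN E (n + 1) α = ⋃ x ∈ descN E n α, outSet E x := by
  ext z
  constructor
  · intro hz
    obtain ⟨w, hw, he⟩ := arcOf_unsnoc n hz
    exact Set.mem_biUnion hw he
  · intro hz
    obtain ⟨x, hx, he⟩ := by simpa using hz
    exact arcOf_snoc hx he

lemma descN_zero (E : V → V → Prop) (α : V) : descN E 0 α = {α} := by
  ext z
  simp [descN, arcOf, eq_comm]

lemma level_finite {E : V → V → Prop} {α : V} (hfin : ∀ x, (outSet E x).Finite) :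
    ∀ n, (descN E n α).Finite := by
  intro n
  induction n with
  | zero => rw [descN_zero]; exact Set.finite_singleton α
  | succ k ih =>
    rw [level_succ]
    exact Set.Finite.biUnion ih fun x _ => hfin x

lemma out_nonempty {E : V → V → Prop} {m : ℕ} (hm : 0 < m)
    (h : ∀ x, (outSet E x).Finite ∧ (outSet E x).ncard = m) (x : V) :
    (outSet E x).Nonempty := by
  apply Set.nonempty_of_ncard_ne_zero
  rw [(h x).2]
  omega

lemma level_nonempty {E : V → V → Prop} {α : V} {m : ℕ} (hm : 0 < m)
    (h : ∀ x, (outSet E x).Finite ∧ (outSet E x).ncard = m) :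
    ∀ n, (descN E n α).Nonempty := by
  intro n
  induction n with
  | zero => exact ⟨α, show arcOf E 0 α α from rfl⟩
  | succ k ih =>
    obtain ⟨x, hx⟩ := ih
    obtain ⟨z, hz⟩ := out_nonempty hm h x
    exact ⟨z, arcOf_snoc hx hz⟩

lemma level_eq {E : V → V → Prop} {α : V}
    (hdisj : ∀ s t : ℕ, s ≠ t → Disjoint (descN E s α) (descN E t α))
    {y : V} {s t : ℕ} (hs : y ∈ descN E s α) (ht : y ∈ descN E t α) : s = t := by
  by_contra h
  exact (hdisj s t h).le_bot ⟨hs, ht⟩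

lemma descN_subset_level {E : V → V → Prop} {α x : V} {s : ℕ}
    (hx : x ∈ descN E s α) (n : ℕ) : descN E n x ⊆ descN E (s + n) α :=
  fun _ hy => arcOf_append s hx hy


lemma P1_forward {E : V → V → Prop} {u : V} (f : desc E u ≃ V)
    (hf : ∀ x y : desc E u, E x.1 y.1 ↔ E (f x) (f y)) :
    ∀ (n : ℕ) (x : desc E u) (y : V), arcOf E n x.1 y →
      ∃ hy : y ∈ desc E u, arcOf E n (f x) (f ⟨y, hy⟩) := by
  intro n
  induction n with
  | zero =>
    intro x y h
    have h' : x.1 = y := h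
    have hy : y ∈ desc E u := h' ▸ x.2
    refine ⟨hy, ?_⟩
    have : x = ⟨y, hy⟩ := Subtype.ext h'
    rw [this]
    rfl
  | succ k ih =>
    intro x y h
    obtain ⟨z, hxz, hzy⟩ := h
    have hz : z ∈ desc E u := by
      obtain ⟨k', hk'⟩ := x.2
      exact ⟨k' + 1, arcOf_snoc hk' hxz⟩
    obtain ⟨hy, harc⟩ := ih ⟨z, hz⟩ y hzy
    exact ⟨hy, ⟨f ⟨z, hz⟩, (hf x ⟨z, hz⟩).1 hxz, harc⟩⟩

lemma P1_backward {E : V → V → Prop} {u : V} (f : desc E u ≃ V)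
    (hf : ∀ x y : desc E u, E x.1 y.1 ↔ E (f x) (f y)) :
    ∀ (n : ℕ) (x : desc E u) (v : V), arcOf E n (f x) v →
      ∃ y : desc E u, f y = v ∧ arcOf E n x.1 y.1 := by
  intro n
  induction n with
  | zero =>
    intro x v h
    exact ⟨x, h, rfl⟩
  | succ k ih =>
    intro x v h
    obtain ⟨w, hw, hwv⟩ := h
    have hw' : f (f.symm w) = w := f.apply_symm_apply w
    have hxz : E x.1 (f.symm w).1 := (hf x (f.symm w)).2 (by rw [hw']; exact hw)
    obtain ⟨y, hy1, hy2⟩ := ih (f.symm w) v (by rw [hw']; exact hwv)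
    exact ⟨y, hy1, (f.symm w).1, hxz, hy2⟩

lemma root_unique {E : V → V → Prop} {α : V} {m : ℕ} (hroot : Rooted E α) (h0 : P0 E α m)
    {ρ : V} (hρ : Rooted E ρ) : ρ = α := by
  obtain ⟨k, hk⟩ := hroot ρ
  obtain ⟨t, ht⟩ := hρ α
  have h1 : α ∈ descN E (k + t) α := arcOf_append k hk ht
  have h2 : α ∈ descN E 0 α := show arcOf E 0 α α from rfl
  have hkt : k + t = 0 := level_eq h0.2.2 h1 h2
  have hk0 : k = 0 := by omega
  subst hk0
  exact (show α = ρ from hk).symm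

lemma card_descN {E : V → V → Prop} {α : V} {m : ℕ} (hroot : Rooted E α) (h0 : P0 E α m)
    (h1 : P1 E) (u : V) (n : ℕ) :
    (descN E n u).Finite ∧ (descN E n u).ncard = (descN E n α).ncard := by
  obtain ⟨f, hf⟩ := h1 u
  have hself : u ∈ desc E u := self_mem_desc E u
  have hα : f ⟨u, hself⟩ = α := by
    apply root_unique hroot h0
    intro v
    obtain ⟨nn, hv⟩ := (f.symm v).2
    obtain ⟨hy, harc⟩ := P1_forward f hf nn ⟨u, hself⟩ (f.symm v).1 hv
    have he : (⟨(f.symm v).1, hy⟩ : desc E u) = f.symm v := Subtype.ext rfl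
    rw [he, f.apply_symm_apply] at harc
    exact ⟨nn, harc⟩
  have e : descN E n u ≃ descN E n α :=
    { toFun := fun y => ⟨f ⟨y.1, ⟨n, y.2⟩⟩, by
        obtain ⟨hy, harc⟩ := P1_forward f hf n ⟨u, hself⟩ y.1 y.2
        rw [hα] at harc
        have he : (⟨y.1, hy⟩ : desc E u) = ⟨y.1, ⟨n, y.2⟩⟩ := Subtype.ext rfl
        rw [he] at harc
        exact harc⟩
      invFun := fun v => ⟨(f.symm v.1).1, by
        have harc : arcOf E n (f ⟨u, hself⟩) v.1 := by rw [hα]; exact v.2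
        obtain ⟨y, hy1, hy2⟩ := P1_backward f hf n ⟨u, hself⟩ v.1 harc
        have : y = f.symm v.1 := by rw [← hy1]; simp
        exact this ▸ hy2⟩
      left_inv := fun y => Subtype.ext (by simp)
      right_inv := fun v => Subtype.ext (by
        show f ⟨(f.symm v.1).1, _⟩ = v.1
        have : (⟨(f.symm v.1).1, _⟩ : desc E u) = f.symm v.1 := Subtype.ext rfl
        rw [this, f.apply_symm_apply]) }
  have hfinα : (descN E n α).Finite := level_finite (fun x => (h0.2.1 x).1) n
  have hfinu : (descN E n u).Finite := by
    rw [← Set.finite_coe_iff]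
    rw [← Set.finite_coe_iff] at hfinα
    exact Finite.of_equiv _ e.symm
  refine ⟨hfinu, ?_⟩
  rw [← Nat.card_coe_set_eq, ← Nat.card_coe_set_eq]
  exact Nat.card_congr e


/-- The set of out-neighbours of `α` having `z` as a descendant. -/
def Sanc (E : V → V → Prop) (α z : V) : Set V := {u | E α u ∧ z ∈ desc E u}

lemma Sanc_subset (E : V → V → Prop) (α z : V) : Sanc E α z ⊆ outSet E α :=
  fun _ hu => hu.1

lemma Sanc_finite {E : V → V → Prop} {α : V} (hfin : (outSet E α).Finite) (z : V) :
    (Sanc E α z).Finite := hfin.subset (Sanc_subset E α z)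

lemma Sanc_mono {E : V → V → Prop} {α z z' : V} (he : E z z') :
    Sanc E α z ⊆ Sanc E α z' := by
  rintro u ⟨h1, k, hk⟩
  exact ⟨h1, k + 1, arcOf_snoc hk he⟩

lemma Sanc_card_eq {E : V → V → Prop} {α : V} (h2 : P2 E α)
    (hfin : ∀ x, (outSet E x).Finite) {n : ℕ} {z₁ z₂ : V}
    (hz₁ : z₁ ∈ descN E n α) (hz₂ : z₂ ∈ descN E n α) :
    (Sanc E α z₁).ncard = (Sanc E α z₂).ncard := by
  have key : ∀ (g : Equiv.Perm V), IsAut E g → g α = α → ∀ z,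
      g '' Sanc E α z ⊆ Sanc E α (g z) := by
    rintro g hg hgα z w ⟨u, ⟨hEu, k, hk⟩, rfl⟩
    refine ⟨?_, k, aut_arcOf hg k hk⟩
    have := (hg α u).1 hEu
    rwa [hgα] at this
  obtain ⟨g, hg, hgα, hgz⟩ := h2 n z₁ hz₁ z₂ hz₂
  have hsymα : g.symm α = α := by rw [Equiv.symm_apply_eq, hgα]
  have hsymz : g.symm z₂ = z₁ := by rw [Equiv.symm_apply_eq, hgz]
  apply le_antisymm
  · have := key g hg hgα z₁
    rw [hgz] at this
    calc (Sanc E α z₁).ncard = (g '' Sanc E α z₁).ncard :=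
          (Set.ncard_image_of_injective _ g.injective).symm
      _ ≤ (Sanc E α z₂).ncard := Set.ncard_le_ncard this (Sanc_finite (hfin α) z₂)
  · have := key g.symm (isAut_symm hg) hsymα z₂
    rw [hsymz] at this
    calc (Sanc E α z₂).ncard = (g.symm '' Sanc E α z₂).ncard :=
          (Set.ncard_image_of_injective _ g.symm.injective).symm
      _ ≤ (Sanc E α z₁).ncard := Set.ncard_le_ncard this (Sanc_finite (hfin α) z₁)

lemma Sanc_arc {E : V → V → Prop} {α : V}
    (hdisj : ∀ s t : ℕ, s ≠ t → Disjoint (descN E s α) (descN E t α))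
    {n : ℕ} {z u : V} (hz : z ∈ descN E (n + 1) α) (hu : u ∈ Sanc E α z) :
    arcOf E n u z := by
  obtain ⟨hEu, k, hk⟩ := hu
  have hu1 : u ∈ descN E 1 α := ⟨u, hEu, rfl⟩
  have : z ∈ descN E (1 + k) α := descN_subset_level hu1 k hk
  have : 1 + k = n + 1 := level_eq hdisj this hz
  have : k = n := by omega
  exact this ▸ hk

lemma count_identity {E : V → V → Prop} {α : V} {m : ℕ} (hroot : Rooted E α)
    (h0 : P0 E α m) (h1 : P1 E) (h2 : P2 E α) (n : ℕ) {z : V}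
    (hz : z ∈ descN E (n + 1) α) :
    m * (descN E n α).ncard = (Sanc E α z).ncard * (descN E (n + 1) α).ncard := by
  classical
  have hfin : ∀ x, (outSet E x).Finite := fun x => (h0.2.1 x).1
  have hOfin : (outSet E α).Finite := hfin α
  have hDfin : (descN E (n + 1) α).Finite := level_finite hfin (n + 1)
  set OF := hOfin.toFinset with hOF
  set DF := hDfin.toFinset with hDF
  have swap : ∑ u ∈ OF, ∑ w ∈ DF, (if arcOf E n u w then (1 : ℕ) else 0)
      = ∑ w ∈ DF, ∑ u ∈ OF, (if arcOf E n u w then (1 : ℕ) else 0) :=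
    Finset.sum_comm
  have hL : ∀ u ∈ OF, ∑ w ∈ DF, (if arcOf E n u w then (1 : ℕ) else 0)
      = (descN E n α).ncard := by
    intro u hu
    have hu' : E α u := by rwa [hOF, Set.Finite.mem_toFinset] at hu
    rw [← Finset.card_filter]
    have hset : ((DF.filter (fun w => arcOf E n u w) : Finset V) : Set V) = descN E n u := by
      ext w
      simp only [Finset.coe_filter, Set.mem_setOf_eq, hDF, Set.Finite.mem_toFinset]
      constructor
      · rintro ⟨_, h⟩; exact h
      · intro h
        refine ⟨?_, h⟩
        have hu1 : u ∈ descN E 1 α := ⟨u, hu', rfl⟩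
        have := descN_subset_level hu1 n h
        rwa [show 1 + n = n + 1 from by omega] at this
    have := Set.ncard_coe_finset (DF.filter (fun w => arcOf E n u w))
    rw [hset] at this
    rw [← this, (card_descN hroot h0 h1 u n).2]
  have hR : ∀ w ∈ DF, ∑ u ∈ OF, (if arcOf E n u w then (1 : ℕ) else 0)
      = (Sanc E α z).ncard := by
    intro w hw
    have hw' : w ∈ descN E (n + 1) α := by rwa [hDF, Set.Finite.mem_toFinset] at hw
    rw [← Finset.card_filter]
    have hset : ((OF.filter (fun u => arcOf E n u w) : Finset V) : Set V) = Sanc E α w := by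
      ext u
      simp only [Finset.coe_filter, Set.mem_setOf_eq, hOF, Set.Finite.mem_toFinset]
      constructor
      · rintro ⟨h1, h⟩; exact ⟨h1, n, h⟩
      · intro h
        exact ⟨h.1, Sanc_arc h0.2.2 hw' h⟩
    have := Set.ncard_coe_finset (OF.filter (fun u => arcOf E n u w))
    rw [hset] at this
    rw [← this, Sanc_card_eq h2 hfin hw' hz]
  rw [Finset.sum_congr rfl hL, Finset.sum_congr rfl hR, Finset.sum_const, Finset.sum_const,
    smul_eq_mul, smul_eq_mul] at swap
  have hOcard : OF.card = m := by
    rw [← (h0.2.1 α).2, Set.ncard_eq_toFinset_card _ hOfin]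
  have hDcard : DF.card = (descN E (n + 1) α).ncard :=
    (Set.ncard_eq_toFinset_card _ hDfin).symm
  rw [hOcard, hDcard] at swap
  rw [swap, mul_comm]


end DigraphAux

open DigraphAux

/-- P3 holds iff some vertex has two nonempty sets of out-neighbours
with disjoint descendant sets. -/
theorem P3_iff_condition_C (E : V → V → Prop) (α : V) (m : ℕ)
    (hroot : Rooted E α) (h0 : P0 E α m) (h1 : P1 E) (h2 : P2 E α) :
    P3 E α ↔ ∃ (x : V) (U W : Set V), U.Nonempty ∧ W.Nonempty ∧
      U ⊆ outSet E x ∧ W ⊆ outSet E x ∧ Disjoint (descSet E U) (descSet E W) := by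
  classical
  have hm : 0 < m := h0.1
  have houts := h0.2.1
  have hdisj := h0.2.2
  have hfin : ∀ x, (outSet E x).Finite := fun x => (houts x).1
  set a : ℕ → ℕ := fun n => (descN E n α).ncard with ha
  have hafin : ∀ n, (descN E n α).Finite := level_finite hfin
  have hapos : ∀ n, 1 ≤ a n := by
    intro n
    have := (level_nonempty hm houts n : (descN E (n+1-1) α).Nonempty)
    have hne : (descN E n α).Nonempty := level_nonempty hm houts n
    have : 0 < a n := by
      rw [ha]
      exact (Set.ncard_pos (hafin n)).2 hne
    omega
  choose zsel hzsel using fun n => level_nonempty hm houts (n + 1)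
  set A : ℕ → ℕ := fun n => (Sanc E α (zsel n)).ncard with hA
  have hSlevel : ∀ n, ∀ z ∈ descN E (n + 1) α, (Sanc E α z).ncard = A n := by
    intro n z hz
    exact Sanc_card_eq h2 hfin hz (hzsel n)
  have hid : ∀ n, m * a n = A n * a (n + 1) := by
    intro n
    have := count_identity hroot h0 h1 h2 n (hzsel n)
    rw [hSlevel n _ (hzsel n)] at this
    exact this
  have hAmono1 : ∀ n, A n ≤ A (n + 1) := by
    intro n
    obtain ⟨z', hz'⟩ := out_nonempty hm houts (zsel n)
    have hz'mem : z' ∈ descN E (n + 2) α := arcOf_snoc (hzsel n) hz'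
    calc A n = (Sanc E α (zsel n)).ncard := rfl
      _ ≤ (Sanc E α z').ncard :=
          Set.ncard_le_ncard (Sanc_mono hz') (Sanc_finite (hfin α) z')
      _ = A (n + 1) := hSlevel (n + 1) z' hz'mem
  have hAmono : Monotone A := monotone_nat_of_le_succ hAmono1
  have hAle : ∀ n, A n ≤ m := by
    intro n
    calc A n ≤ (outSet E α).ncard :=
          Set.ncard_le_ncard (Sanc_subset E α (zsel n)) (hfin α)
      _ = m := (houts α).2
  constructor
  · -- P3 → condition C
    intro hP3
    by_contra hC
    push_neg at hC
    have meet : ∀ x u w, E x u → E x w → (desc E u ∩ desc E w).Nonempty := by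
      intro x u w hu hw
      have := hC x {u} {w} (Set.singleton_nonempty u) (Set.singleton_nonempty w)
        (Set.singleton_subset_iff.2 hu) (Set.singleton_subset_iff.2 hw)
      rw [Set.not_disjoint_iff_nonempty_inter] at this
      simpa [descSet] using this
    have hAlt : ∀ n, A n < m := by
      intro n
      have h3 : a n < a (n + 1) := hP3 n
      have hida := hid n
      by_contra hge
      push_neg at hge
      have h4 : m * a (n + 1) ≤ A n * a (n + 1) := Nat.mul_le_mul_right _ hge
      rw [← hida] at h4
      have h5 := Nat.le_of_mul_le_mul_left h4 hm
      omega
    -- A is monotone and bounded, so eventually constant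
    have hBdd : BddAbove (Set.range A) := ⟨m, by rintro x ⟨n, rfl⟩; exact hAle n⟩
    obtain ⟨N, hN⟩ : ∃ N, A N = sSup (Set.range A) := by
      have := Nat.sSup_mem (s := Set.range A) ⟨A 0, 0, rfl⟩ hBdd
      obtain ⟨N, hN⟩ := this
      exact ⟨N, hN⟩
    have hconst : ∀ n, N ≤ n → A n = A N := by
      intro n hn
      refine le_antisymm ?_ (hAmono hn)
      rw [hN]
      exact le_csSup hBdd ⟨n, rfl⟩
    -- S is constant along edges beyond level N
    have Sedge : ∀ n, N ≤ n → ∀ z ∈ descN E (n + 1) α, ∀ z', E z z' →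
        Sanc E α z = Sanc E α z' := by
      intro n hn z hz z' he
      have hz' : z' ∈ descN E (n + 2) α := arcOf_snoc hz he
      apply Set.eq_of_subset_of_ncard_le (Sanc_mono he) _ (Sanc_finite (hfin α) z')
      rw [hSlevel n z hz, hSlevel (n + 1) z' hz', hconst n hn, hconst (n + 1) (by omega)]
    have Sdesc : ∀ (k n : ℕ), N ≤ n → ∀ z ∈ descN E (n + 1) α, ∀ w, arcOf E k z w →
        Sanc E α w = Sanc E α z := by
      intro k
      induction k with
      | zero =>
        intro n hn z hz w hw
        have : z = w := hw
        rw [this]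
      | succ j ih =>
        intro n hn z hz w hw
        obtain ⟨c, hc, harc⟩ := hw
        have hcmem : c ∈ descN E (n + 1 + 1) α := arcOf_snoc hz hc
        have h1 : Sanc E α w = Sanc E α c := ih (n + 1) (by omega) c hcmem w harc
        have h2 : Sanc E α z = Sanc E α c := Sedge n hn z hz c hc
        rw [h1, h2]
    have Smeet : ∀ n, N ≤ n → ∀ z₁ ∈ descN E (n + 1) α, ∀ z₂ ∈ descN E (n + 1) α,
        (desc E z₁ ∩ desc E z₂).Nonempty → Sanc E α z₁ = Sanc E α z₂ := by
      rintro n hn z₁ hz₁ z₂ hz₂ ⟨w, ⟨k₁, hw₁⟩, ⟨k₂, hw₂⟩⟩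
      rw [← Sdesc k₁ n hn z₁ hz₁ w hw₁, ← Sdesc k₂ n hn z₂ hz₂ w hw₂]
    -- connectivity of the meet graph on each level
    set rel : ℕ → V → V → Prop := fun n p q =>
      p ∈ descN E n α ∧ q ∈ descN E n α ∧ (desc E p ∩ desc E q).Nonempty with hrel
    have lift_step : ∀ n p q, rel n p q → ∀ y₁, E p y₁ → ∀ y₂, E q y₂ →
        Relation.ReflTransGen (rel (n + 1)) y₁ y₂ := by
      rintro n p q ⟨hp, hq, w, ⟨k₁, hw₁⟩, ⟨k₂, hw₂⟩⟩ y₁ he₁ y₂ he₂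
      have hk : n + k₁ = n + k₂ :=
        level_eq hdisj (descN_subset_level hp k₁ hw₁) (descN_subset_level hq k₂ hw₂)
      have hy₁ : y₁ ∈ descN E (n + 1) α := arcOf_snoc hp he₁
      have hy₂ : y₂ ∈ descN E (n + 1) α := arcOf_snoc hq he₂
      match k₁, k₂, hk with
      | 0, 0, _ =>
        have hpw : p = w := hw₁
        have hqw : q = w := hw₂
        subst hpw
        have hpq : p = q := hqw.symm
        subst hpq
        exact Relation.ReflTransGen.single ⟨hy₁, hy₂, meet p y₁ y₂ he₁ he₂⟩
      | j₁ + 1, j₂ + 1, _ =>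
        obtain ⟨c, hc, hcw⟩ := hw₁
        obtain ⟨c', hc', hcw'⟩ := hw₂
        have hcmem : c ∈ descN E (n + 1) α := arcOf_snoc hp hc
        have hcmem' : c' ∈ descN E (n + 1) α := arcOf_snoc hq hc'
        have s1 : rel (n + 1) y₁ c := ⟨hy₁, hcmem, meet p y₁ c he₁ hc⟩
        have s2 : rel (n + 1) c c' := ⟨hcmem, hcmem', ⟨w, ⟨j₁, hcw⟩, ⟨j₂, hcw'⟩⟩⟩
        have s3 : rel (n + 1) c' y₂ := ⟨hcmem', hy₂, meet q c' y₂ hc' he₂⟩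
        exact ((Relation.ReflTransGen.single s1).trans
          (Relation.ReflTransGen.single s2)).trans (Relation.ReflTransGen.single s3)
    have lift : ∀ n p q, Relation.ReflTransGen (rel n) p q → p ∈ descN E n α →
        ∀ y₁, E p y₁ → ∀ y₂, E q y₂ → Relation.ReflTransGen (rel (n + 1)) y₁ y₂ := by
      intro n p q h
      induction h with
      | refl =>
        intro hp y₁ h₁ y₂ h₂
        exact lift_step n p p ⟨hp, hp, ⟨p, self_mem_desc E p, self_mem_desc E p⟩⟩ y₁ h₁ y₂ h₂
      | @tail b c hbc hstep ih =>
        intro hp y₁ h₁ y₂ h₂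
        obtain ⟨cb, hcb⟩ := out_nonempty hm houts b
        exact (ih hp y₁ h₁ cb hcb).trans (lift_step n b c hstep cb hcb y₂ h₂)
    have conn : ∀ n, ∀ z₁ ∈ descN E n α, ∀ z₂ ∈ descN E n α,
        Relation.ReflTransGen (rel n) z₁ z₂ := by
      intro n
      induction n with
      | zero =>
        intro z₁ hz₁ z₂ hz₂
        have h1 : α = z₁ := hz₁
        have h2 : α = z₂ := hz₂
        subst h1; rw [← h2]
      | succ k ih =>
        intro z₁ hz₁ z₂ hz₂
        obtain ⟨p₁, hp₁, he₁⟩ := arcOf_unsnoc k hz₁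
        obtain ⟨p₂, hp₂, he₂⟩ := arcOf_unsnoc k hz₂
        exact lift k p₁ p₂ (ih p₁ hp₁ p₂ hp₂) hp₁ z₁ he₁ z₂ he₂
    -- all vertices at level N+1 have the same ancestor set
    have sameS' : ∀ z₁ z₂ : V, Relation.ReflTransGen (rel (N + 1)) z₁ z₂ →
        Sanc E α z₁ = Sanc E α z₂ := by
      intro z₁ z₂ hchain
      induction hchain with
      | refl => rfl
      | @tail b c hbc hstep ih =>
        obtain ⟨hbmem, hcmem, hmeet⟩ := hstep
        exact ih.trans (Smeet N le_rfl b hbmem c hcmem hmeet)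
    have sameS : ∀ z₁ ∈ descN E (N + 1) α, ∀ z₂ ∈ descN E (N + 1) α,
        Sanc E α z₁ = Sanc E α z₂ := fun z₁ hz₁ z₂ hz₂ =>
      sameS' z₁ z₂ (conn (N + 1) z₁ hz₁ z₂ hz₂)
    -- derive the contradiction
    have hz₀ := hzsel N
    have hssub : Sanc E α (zsel N) ⊆ outSet E α := Sanc_subset E α (zsel N)
    have hne : Sanc E α (zsel N) ≠ outSet E α := by
      intro heq
      have e1 : (Sanc E α (zsel N)).ncard = m := by rw [heq]; exact (houts α).2
      have e2 : (Sanc E α (zsel N)).ncard = A N := hSlevel N _ hz₀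
      have e3 := hAlt N
      omega
    obtain ⟨u, hu_out, hu_not⟩ := Set.exists_of_ssubset (hssub.ssubset_of_ne hne)
    have hu1 : u ∈ descN E 1 α := ⟨u, hu_out, rfl⟩
    have hdescu : (descN E N u).Nonempty := by
      apply Set.nonempty_of_ncard_ne_zero
      rw [(card_descN hroot h0 h1 u N).2]
      show a N ≠ 0
      have := hapos N
      omega
    obtain ⟨z₁, hz₁⟩ := hdescu
    have hz₁mem : z₁ ∈ descN E (N + 1) α := by
      have := descN_subset_level hu1 N hz₁
      rwa [show 1 + N = N + 1 from by omega] at this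
    have : u ∈ Sanc E α z₁ := ⟨hu_out, N, hz₁⟩
    rw [sameS z₁ hz₁mem (zsel N) hz₀] at this
    exact hu_not this
  · -- condition C → P3
    rintro ⟨x, U, W, ⟨u, hu⟩, ⟨w, hw⟩, hUsub, hWsub, hdisjUW⟩
    have hdu : desc E u ⊆ descSet E U := Set.subset_biUnion_of_mem hu
    have hdw : desc E w ⊆ descSet E W := Set.subset_biUnion_of_mem hw
    have hduw : Disjoint (desc E u) (desc E w) := hdisjUW.mono hdu hdw
    obtain ⟨s, hs⟩ := hroot x
    have hu' : u ∈ descN E (s + 1) α := arcOf_snoc hs (hUsub hu)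
    have hw' : w ∈ descN E (s + 1) α := arcOf_snoc hs (hWsub hw)
    have growth : ∀ i, 2 * a i ≤ a (s + 1 + i) := by
      intro i
      have hsubu : descN E i u ⊆ descN E (s + 1 + i) α := descN_subset_level hu' i
      have hsubw : descN E i w ⊆ descN E (s + 1 + i) α := descN_subset_level hw' i
      have hsu : descN E i u ⊆ desc E u := fun y hy => ⟨i, hy⟩
      have hsw : descN E i w ⊆ desc E w := fun y hy => ⟨i, hy⟩
      have hdisji : Disjoint (descN E i u) (descN E i w) := hduw.mono hsu hsw
      have hcu := card_descN hroot h0 h1 u i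
      have hcw := card_descN hroot h0 h1 w i
      have hunion : (descN E i u ∪ descN E i w).ncard = 2 * a i := by
        rw [Set.ncard_union_eq hdisji hcu.1 hcw.1, hcu.2, hcw.2]
        ring
      calc 2 * a i = (descN E i u ∪ descN E i w).ncard := hunion.symm
        _ ≤ a (s + 1 + i) := Set.ncard_le_ncard (Set.union_subset hsubu hsubw)
            (hafin (s + 1 + i))
    by_contra hP3
    rw [P3] at hP3
    push_neg at hP3
    obtain ⟨i, hi⟩ := hP3
    have hi' : a (i + 1) ≤ a i := hi
    have step : ∀ j, a (j + 1) ≤ a j → a (j + 2) ≤ a (j + 1) := by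
      intro j hj
      have hAj : m ≤ A j := by
        have h1' : m * a (j + 1) ≤ m * a j := Nat.mul_le_mul_left _ hj
        rw [hid j] at h1'
        exact Nat.le_of_mul_le_mul_right h1' (hapos (j + 1))
      have hAj1 : m ≤ A (j + 1) := le_trans hAj (hAmono1 j)
      have h2' : m * a (j + 2) ≤ A (j + 1) * a (j + 2) := Nat.mul_le_mul_right _ hAj1
      rw [← hid (j + 1)] at h2'
      exact Nat.le_of_mul_le_mul_left h2' hm
    have dec1 : ∀ k, a (i + k + 1) ≤ a (i + k) := by
      intro k
      induction k with
      | zero => exact hi'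
      | succ l ih =>
        have h6 := step (i + l) ih
        rwa [show i + l + 1 + 1 = i + (l + 1) + 1 from by omega,
          show i + l + 1 = i + (l + 1) from by omega] at h6
    have dec : ∀ k, a (i + k) ≤ a i := by
      intro k
      induction k with
      | zero => exact le_rfl
      | succ j ih => exact le_trans (dec1 j) ih
    have hg := growth i
    have hd := dec (s + 1)
    have heq : a (s + 1 + i) = a (i + (s + 1)) := congrArg a (by omega)
    have := hapos i
    omega
end

section
/- Let D be a weakly descendant-homogeneous digraph such that for every vertex x there exist a, b ∈ desc(x) with desc(a) ∩ desc(b) = ∅. Then D is connected and does not have property Z. -/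
/-!
Since an arc never leaves a descendant set, no arc joins two disjoint descendant sets
`desc a` and `desc b`. Hence automorphisms `θ` with `θ a = a'` and `η` with `η b = b'`
(vertex transitivity) glue to an isomorphism `desc a ∪ desc b ≅ desc a' ∪ desc b'`
whenever both pairs have disjoint descendant sets, and weak descendant-homogeneity extends it
to an automorphism `g` with `g a = a'`, `g b = b'`.

Connectedness: take `a, b ∈ desc u` with disjoint descendant sets. If `v` lay in another
component, `desc a` and `desc v` would be disjoint too, and an automorphism fixing `a` and
sending `b` to `v` would carry the path from `a` to `b` to one from `a` to `v`.

No property Z: for a grading `f : V → ℤ` and an automorphism `g`, the shift `f ∘ g - f` is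
constant on each descendant set, so swapping `p, q ∈ desc x` with disjoint descendant sets
gives `f p = f q`. With `a, b ∈ desc x` and `c, d ∈ desc a` split in this way, `f c = f b = f a`
forces the path from `a` to `c` to be trivial, and then `d ∈ desc c ∩ desc d`.
-/

variable {V : Type*}

open Set Relation

section Digraph

variable {E : V → V → Prop}

theorem arcOf_add_s11 {m n : ℕ} {x y z : V} (hxy : arcOf E m x y) (hyz : arcOf E n y z) :
    arcOf E (m + n) x z := by
  induction m generalizing x with
  | zero => rw [Nat.zero_add]; exact (show x = y from hxy) ▸ hyz
  | succ m ih =>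
    obtain ⟨w, hxw, hwy⟩ := hxy
    rw [Nat.succ_add]
    exact ⟨w, hxw, ih hwy⟩

theorem desc_subset_desc {x y : V} (h : y ∈ desc E x) : desc E y ⊆ desc E x := by
  rintro z ⟨n, hn⟩
  obtain ⟨m, hm⟩ := h
  exact ⟨m + n, arcOf_add_s11 hm hn⟩

theorem mem_desc_of_adj {x y z : V} (hy : y ∈ desc E x) (hyz : E y z) : z ∈ desc E x :=
  desc_subset_desc hy ⟨1, z, hyz, rfl⟩

theorem not_adj_of_disjoint_desc {a b x y : V} (hab : Disjoint (desc E a) (desc E b))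
    (hx : x ∈ desc E a) (hy : y ∈ desc E b) : ¬ E x y :=
  fun hxy => hab.notMem_of_mem_left (mem_desc_of_adj hx hxy) hy

theorem reflTransGen_of_mem_desc {x y : V} (h : y ∈ desc E x) :
    ReflTransGen (SymmGen E) x y := by
  obtain ⟨n, h⟩ := h
  induction n generalizing x with
  | zero => exact (show x = y from h) ▸ .refl
  | succ n ih =>
    obtain ⟨z, hxz, hzy⟩ := h
    exact .head (.of_rel hxz) (ih hzy)

theorem descSet_pair [DecidableEq V] (a b : V) :
    descSet E ↑({a, b} : Finset V) = desc E a ∪ desc E b := by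
  simp [descSet]

theorem eq_add_of_arcOf {f : V → ℤ} (hf : ∀ x y, E x y → f y = f x + 1) {n : ℕ} {x y : V}
    (h : arcOf E n x y) : f y = f x + n := by
  induction n generalizing x with
  | zero => simp [show x = y from h]
  | succ n ih =>
    obtain ⟨z, hxz, hzy⟩ := h
    rw [ih hzy, hf x z hxz]
    push_cast
    ring

end Digraph

namespace IsAut

variable {E : V → V → Prop} {g : Equiv.Perm V}

theorem symm (hg : IsAut E g) : IsAut E g.symm :=
  fun x y => by simpa using (hg (g.symm x) (g.symm y)).symm

theorem map_arcOf (hg : IsAut E g) {n : ℕ} {x y : V} (h : arcOf E n x y) :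
    arcOf E n (g x) (g y) := by
  induction n generalizing x with
  | zero => exact congrArg g h
  | succ n ih =>
    obtain ⟨z, hxz, hzy⟩ := h
    exact ⟨g z, (hg x z).mp hxz, ih hzy⟩

theorem mem_desc_iff (hg : IsAut E g) {x y : V} : g y ∈ desc E (g x) ↔ y ∈ desc E x := by
  refine ⟨fun ⟨n, h⟩ => ⟨n, ?_⟩, fun ⟨n, h⟩ => ⟨n, hg.map_arcOf h⟩⟩
  simpa using hg.symm.map_arcOf h

theorem bijOn_desc (hg : IsAut E g) (x : V) : BijOn g (desc E x) (desc E (g x)) := by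
  refine ⟨fun y hy => hg.mem_desc_iff.mpr hy, g.injective.injOn, fun y hy => ⟨g.symm y, ?_, ?_⟩⟩
  · rw [← hg.mem_desc_iff, Equiv.apply_symm_apply]
    exact hy
  · exact g.apply_symm_apply y

theorem map_reflTransGen (hg : IsAut E g) {x y : V} (h : ReflTransGen (SymmGen E) x y) :
    ReflTransGen (SymmGen E) (g x) (g y) :=
  ReflTransGen.lift g (fun p q hpq => hpq.imp (hg p q).mp (hg q p).mp) x y h

theorem sub_eq_of_mem_desc (hg : IsAut E g) {f : V → ℤ} (hf : ∀ x y, E x y → f y = f x + 1)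
    {x y : V} (hy : y ∈ desc E x) : f (g y) - f y = f (g x) - f x := by
  obtain ⟨n, hn⟩ := hy
  rw [eq_add_of_arcOf hf hn, eq_add_of_arcOf hf (hg.map_arcOf hn)]
  ring

end IsAut

namespace WDH

variable {E : V → V → Prop}

theorem exists_isAut_eqOn (hwdh : WDH E) {X Y : Finset V} {F : V → V}
    (hF : BijOn F (descSet E X) (descSet E Y))
    (hadj : ∀ x ∈ descSet E X, ∀ y ∈ descSet E X, E x y ↔ E (F x) (F y)) :
    ∃ g : Equiv.Perm V, IsAut E g ∧ EqOn g F X := by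
  obtain ⟨g, hg, hgF⟩ := hwdh.2 X Y (hF.equiv F) fun p q => hadj p.1 p.2 q.1 q.2
  exact ⟨g, hg, fun x hx => hgF x hx⟩

theorem exists_isAut_map_pair (hwdh : WDH E) {a b a' b' : V}
    (hab : Disjoint (desc E a) (desc E b)) (hab' : Disjoint (desc E a') (desc E b')) :
    ∃ g : Equiv.Perm V, IsAut E g ∧ g a = a' ∧ g b = b' := by
  classical
  obtain ⟨θ, hθ, rfl⟩ := hwdh.1 a a'
  obtain ⟨η, hη, rfl⟩ := hwdh.1 b b'
  set F := (desc E a).piecewise θ η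
  have hFa : EqOn F θ (desc E a) := fun x hx => piecewise_eq_of_mem _ _ _ hx
  have hFb : EqOn F η (desc E b) :=
    fun x hx => piecewise_eq_of_notMem _ _ _ (hab.notMem_of_mem_right hx)
  have hF : BijOn F (desc E a ∪ desc E b) (desc E (θ a) ∪ desc E (η b)) := by
    refine ((hθ.bijOn_desc a).congr hFa.symm).union ((hη.bijOn_desc b).congr hFb.symm) ?_
    refine (injOn_union hab).2
      ⟨θ.injective.injOn.congr hFa.symm, η.injective.injOn.congr hFb.symm, ?_⟩
    intro x hx y hy
    rw [hFa hx, hFb hy]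
    exact hab'.ne_of_mem (hθ.mem_desc_iff.mpr hx) (hη.mem_desc_iff.mpr hy)
  have hadj : ∀ x ∈ desc E a ∪ desc E b, ∀ y ∈ desc E a ∪ desc E b,
      E x y ↔ E (F x) (F y) := by
    rintro x (hx | hx) y (hy | hy)
    · rw [hFa hx, hFa hy]; exact hθ x y
    · rw [hFa hx, hFb hy]
      exact iff_of_false (not_adj_of_disjoint_desc hab hx hy)
        (not_adj_of_disjoint_desc hab' (hθ.mem_desc_iff.mpr hx) (hη.mem_desc_iff.mpr hy))
    · rw [hFb hx, hFa hy]
      exact iff_of_false (not_adj_of_disjoint_desc hab.symm hx hy)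
        (not_adj_of_disjoint_desc hab'.symm (hη.mem_desc_iff.mpr hx) (hθ.mem_desc_iff.mpr hy))
    · rw [hFb hx, hFb hy]; exact hη x y
  rw [← descSet_pair, ← descSet_pair] at hF
  rw [← descSet_pair] at hadj
  obtain ⟨g, hg, hgF⟩ := hwdh.exists_isAut_eqOn hF hadj
  exact ⟨g, hg, (hgF (by simp)).trans (hFa (self_mem_desc E a)),
    (hgF (by simp)).trans (hFb (self_mem_desc E b))⟩

theorem reflTransGen_symmGen (hwdh : WDH E)
    (hsplit : ∀ x : V, ∃ a ∈ desc E x, ∃ b ∈ desc E x, Disjoint (desc E a) (desc E b))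
    (u v : V) : ReflTransGen (SymmGen E) u v := by
  by_contra huv
  obtain ⟨a, ha, b, hb, hab⟩ := hsplit u
  have hua := reflTransGen_of_mem_desc ha
  have hav : Disjoint (desc E a) (desc E v) := by
    refine disjoint_left.mpr fun z hza hzv => huv ?_
    exact (hua.trans (reflTransGen_of_mem_desc hza)).trans (symm (reflTransGen_of_mem_desc hzv))
  obtain ⟨g, hg, hga, hgb⟩ := hwdh.exists_isAut_map_pair hab hav
  have hab' : ReflTransGen (SymmGen E) a b := (symm hua).trans (reflTransGen_of_mem_desc hb)
  have hav' := hg.map_reflTransGen hab'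
  rw [hga, hgb] at hav'
  exact huv (hua.trans hav')

theorem eq_of_disjoint_desc (hwdh : WDH E) {f : V → ℤ} (hf : ∀ x y, E x y → f y = f x + 1)
    {x p q : V} (hp : p ∈ desc E x) (hq : q ∈ desc E x) (hpq : Disjoint (desc E p) (desc E q)) :
    f p = f q := by
  obtain ⟨g, hg, hgp, hgq⟩ := hwdh.exists_isAut_map_pair hpq hpq.symm
  have hp' := hg.sub_eq_of_mem_desc hf hp
  have hq' := hg.sub_eq_of_mem_desc hf hq
  rw [hgp] at hp'
  rw [hgq] at hq'
  omega

theorem not_grading [Nonempty V] (hwdh : WDH E)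
    (hsplit : ∀ x : V, ∃ a ∈ desc E x, ∃ b ∈ desc E x, Disjoint (desc E a) (desc E b))
    (f : V → ℤ) : ¬ ∀ x y, E x y → f y = f x + 1 := by
  intro hf
  obtain ⟨a, ha, b, hb, hab⟩ := hsplit (Classical.arbitrary V)
  obtain ⟨c, hc, d, hd, hcd⟩ := hsplit a
  have hfab := hwdh.eq_of_disjoint_desc hf ha hb hab
  have hfcb := hwdh.eq_of_disjoint_desc hf (desc_subset_desc ha hc) hb
    (hab.mono_left (desc_subset_desc hc))
  obtain ⟨n, hn⟩ := hc
  obtain rfl : n = 0 := by have := eq_add_of_arcOf hf hn; omega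
  obtain rfl : a = c := hn
  exact hcd.notMem_of_mem_left hd (self_mem_desc E d)

end WDH

/-- a weakly descendant-homogeneous digraph in which every descendant
set contains two vertices with disjoint descendant sets is connected and has no
property Z. -/
theorem wdh_connected_no_propZ (E : V → V → Prop)
    (hwdh : WDH E)
    (hsplit : ∀ x : V, ∃ a ∈ desc E x, ∃ b ∈ desc E x, Disjoint (desc E a) (desc E b)) :
    (∀ u v : V, Relation.ReflTransGen (fun a b => E a b ∨ E b a) u v) ∧
    ¬ HasPropZ E := by
  refine ⟨hwdh.reflTransGen_symmGen hsplit, ?_⟩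
  rintro ⟨f, hfsurj, hf⟩
  have : Nonempty V := ⟨(hfsurj 0).choose⟩
  exact hwdh.not_grading hsplit f hf
end
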